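/- arXiv:2512.06135 — 5 statements merged into one kernel-verified Lean document; each statement's English description precedes it below -/
import Mathlib

section
/- Let A be a finite non-unital, non-associative k-algebra and let B be a non-unital, non-associative k-algebra with Id(A) ⊆ Id(B). If B is generated as a k-algebra by a finite set, then B is finite. (In other words, the variety var(A) generated by a finite algebra is locally finite.) -/
universe u v w x
open Function
noncomputable section

/-- The free non-unital, non-associative `k`-algebra on the countably many
generators `x₁, x₂, …` (indexed by `ℕ`): the magma algebra over `k` of the free
magma on `ℕ`. -/
abbrev FreeAlg (k : Type u) [CommRing k] : Type u := FreeNonUnitalNonAssocAlgebra k ℕ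

/-- `f` is a polynomial identity of the algebra `A`: every `k`-algebra
homomorphism from the free algebra to `A` sends `f` to `0`. -/
def IsPI (k : Type u) [CommRing k] (A : Type v) [NonUnitalNonAssocRing A] [Module k A]
    [SMulCommClass k A A] [IsScalarTower k A A] (f : FreeAlg k) : Prop :=
  ∀ φ : FreeAlg k →ₙₐ[k] A, φ f = 0

/-- `Id(A)`: the set of all polynomial identities of `A`. -/
def Ids (k : Type u) [CommRing k] (A : Type v) [NonUnitalNonAssocRing A] [Module k A]
    [SMulCommClass k A A] [IsScalarTower k A A] : Set (FreeAlg k) :=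
  {f | IsPI k A f}

/-- Evaluation at a point as a non-unital algebra hom out of a pi type. -/
def evPt (k : Type u) [CommRing k] (A : Type v) [NonUnitalNonAssocRing A] [Module k A]
    [SMulCommClass k A A] [IsScalarTower k A A] {n : ℕ} (a : Fin n → A) :
    ((Fin n → A) → A) →ₙₐ[k] A :=
  { toFun := fun g => g a
    map_add' := fun _ _ => rfl
    map_mul' := fun _ _ => rfl
    map_smul' := fun _ _ => rfl
    map_zero' := rfl }

/-- If `A` is a finite algebra, `B` satisfies all polynomial
identities of `A`, and `B` is generated as a `k`-algebra by a finite set, then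
`B` is finite (the variety generated by a finite algebra is locally finite). -/
theorem locally_finite (k : Type u) [CommRing k]
    (A : Type v) [NonUnitalNonAssocRing A] [Module k A] [SMulCommClass k A A]
    [IsScalarTower k A A] [Finite A]
    (B : Type w) [NonUnitalNonAssocRing B] [Module k B] [SMulCommClass k B B]
    [IsScalarTower k B B]
    (hPI : Ids k A ⊆ Ids k B)
    (s : Finset B) (hs : NonUnitalAlgebra.adjoin k (s : Set B) = ⊤) :
    Finite B := by
  classical
  set n := s.card with hn
  set b : Fin n → B := fun i => ((s.equivFin.symm i : s) : B) with hb
  set Fn := FreeNonUnitalNonAssocAlgebra k (Fin n) with hFn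
  set ψ : Fn →ₙₐ[k] B := FreeNonUnitalNonAssocAlgebra.lift k b with hψ
  -- ψ is surjective
  have hψsurj : Function.Surjective ψ := by
    intro y
    have hsub : (s : Set B) ⊆ (NonUnitalAlgHom.range ψ : Set B) := by
      intro x hx
      show x ∈ NonUnitalAlgHom.range ψ
      rw [NonUnitalAlgHom.mem_range]
      refine ⟨FreeNonUnitalNonAssocAlgebra.of k (s.equivFin ⟨x, hx⟩), ?_⟩
      rw [FreeNonUnitalNonAssocAlgebra.lift_of_apply]
      exact congrArg Subtype.val (s.equivFin.symm_apply_apply ⟨x, hx⟩)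
    have : NonUnitalAlgebra.adjoin k (s : Set B) ≤ NonUnitalAlgHom.range ψ :=
      NonUnitalAlgebra.adjoin_le hsub
    rw [hs] at this
    exact (NonUnitalAlgHom.mem_range _).mp (this (Set.mem_univ y))
  -- the "universal evaluation" map
  set Ψ : Fn →ₙₐ[k] ((Fin n → A) → A) :=
    FreeNonUnitalNonAssocAlgebra.lift k (fun (i : Fin n) (a : Fin n → A) => a i) with hΨ
  -- kernel of Ψ is contained in kernel of ψ
  have key : ∀ f : Fn, Ψ f = 0 → ψ f = 0 := by
    intro f hf
    -- first: all evaluations into A vanish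
    have heval : ∀ a : Fin n → A, FreeNonUnitalNonAssocAlgebra.lift k a f = 0 := by
      intro a
      have hcomp : (evPt k A a).comp Ψ = FreeNonUnitalNonAssocAlgebra.lift k a := by
        apply FreeNonUnitalNonAssocAlgebra.hom_ext
        intro i
        simp [hΨ, evPt]
      calc FreeNonUnitalNonAssocAlgebra.lift k a f = (evPt k A a).comp Ψ f := by rw [hcomp]
        _ = evPt k A a (Ψ f) := rfl
        _ = 0 := by rw [hf]; rfl
    -- transfer f to the free algebra on ℕ
    set π : Fn →ₙₐ[k] FreeAlg k :=
      FreeNonUnitalNonAssocAlgebra.lift k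
        (fun i : Fin n => FreeNonUnitalNonAssocAlgebra.of k (i : ℕ)) with hπ
    have hId : π f ∈ Ids k A := by
      intro φ
      have hcomp : φ.comp π =
          FreeNonUnitalNonAssocAlgebra.lift k
            (fun i : Fin n => φ (FreeNonUnitalNonAssocAlgebra.of k (i : ℕ))) := by
        apply FreeNonUnitalNonAssocAlgebra.hom_ext
        intro i
        simp [hπ]
      have : φ (π f) = φ.comp π f := rfl
      rw [this, hcomp, heval]
    have hIdB : π f ∈ Ids k B := hPI hId
    -- apply it to the evaluation hom into B
    set b' : ℕ → B := fun m => if h : m < n then b ⟨m, h⟩ else 0 with hb'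
    have := hIdB (FreeNonUnitalNonAssocAlgebra.lift k b')
    have hcomp : (FreeNonUnitalNonAssocAlgebra.lift k b').comp π = ψ := by
      apply FreeNonUnitalNonAssocAlgebra.hom_ext
      intro i
      simp [hπ, hψ, hb', i.isLt]
    calc ψ f = (FreeNonUnitalNonAssocAlgebra.lift k b').comp π f := by rw [hcomp]
      _ = FreeNonUnitalNonAssocAlgebra.lift k b' (π f) := rfl
      _ = 0 := this
  -- build a surjection from a finite type onto B
  have : Finite (Set.range Ψ) := Subtype.finite
  refine Finite.of_surjective (fun c : Set.range Ψ => ψ (Classical.choose c.2)) ?_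
  intro y
  obtain ⟨f, rfl⟩ := hψsurj y
  refine ⟨⟨Ψ f, f, rfl⟩, ?_⟩
  have hc : Ψ (Classical.choose (⟨f, rfl⟩ : ∃ g, Ψ g = Ψ f)) = Ψ f :=
    Classical.choose_spec (⟨f, rfl⟩ : ∃ g, Ψ g = Ψ f)
  have hz : Ψ (Classical.choose (⟨f, rfl⟩ : ∃ g, Ψ g = Ψ f) - f) = 0 := by
    rw [map_sub, hc, sub_self]
  have := key _ hz
  rw [map_sub, sub_eq_zero] at this
  exact this
end
end

section
/- Let A be a finite non-unital, non-associative k-algebra. If f ∈ F is a polynomial identity of every critical section of A (here the sections of A include A itself, taken with the zero ideal), then f is a polynomial identity of A. In other words, every finite algebra belongs to the variety generated by its critical sections. -/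
/-!
Every finite section `B` of `A` satisfies `f`, by strong induction on `|B|`. A critical `B` does
so by hypothesis. A non-critical `B` on which `f` failed would, by the definition of criticality,
have a proper section `R ⧸ I` on which `f` still fails; but `R ⧸ I` is again a section of `A` and
has fewer elements than `B`, contradicting the induction hypothesis. Then take `B = A`.
-/
universe u v w x
open Function
noncomputable section

/-- An ideal of the algebra `A`: a `k`-submodule `I` with `AI ⊆ I` and `IA ⊆ I`. -/
def IsIdeal (k : Type u) [CommRing k] (A : Type v) [NonUnitalNonAssocRing A] [Module k A]
    (I : Submodule k A) : Prop :=
  ∀ a : A, ∀ x ∈ I, a * x ∈ I ∧ x * a ∈ I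
/-- `S` is a section of `A`: there are a subalgebra `R ⊆ A` and an ideal of `R`
with quotient isomorphic to `S`; equivalently, `S` is a surjective homomorphic
image of a subalgebra of `A` (the ideal being the kernel). -/
def IsSection (k : Type u) [CommRing k] (A : Type v) [NonUnitalNonAssocRing A] [Module k A]
    [SMulCommClass k A A] [IsScalarTower k A A]
    (S : Type w) [NonUnitalNonAssocRing S] [Module k S]
    [SMulCommClass k S S] [IsScalarTower k S S] : Prop :=
  ∃ (R : NonUnitalSubalgebra k A) (φ : ↥R →ₙₐ[k] S), Surjective φ

/-- `f` is a polynomial identity of the section `R/I` of `A`: every evaluation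
of `f` with arguments in `R` lands in `I`.  (Since the free algebra is free,
homomorphisms to `R/I` are exactly evaluations composed with the projection.) -/
def SectionPI (k : Type u) [CommRing k] (A : Type v) [NonUnitalNonAssocRing A] [Module k A]
    [SMulCommClass k A A] [IsScalarTower k A A]
    (R : NonUnitalSubalgebra k A) (I : Submodule k ↥R) (f : FreeAlg k) : Prop :=
  ∀ v : ℕ → ↥R, FreeNonUnitalNonAssocAlgebra.lift k v f ∈ I

/-- `A` is critical: some `f` is a polynomial identity of every proper section
`R/I` of `A` (proper means not `R = A` with `I = 0`) but not of `A` itself. -/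
def IsCritical (k : Type u) [CommRing k] (A : Type v) [NonUnitalNonAssocRing A] [Module k A]
    [SMulCommClass k A A] [IsScalarTower k A A] : Prop :=
  ∃ f : FreeAlg k, ¬ IsPI k A f ∧
    ∀ (R : NonUnitalSubalgebra k A) (I : Submodule k ↥R), IsIdeal k ↥R I →
      ¬(R = ⊤ ∧ I = ⊥) → SectionPI k A R I f

namespace IsIdeal

variable {k : Type u} [CommRing k] {M : Type v} [NonUnitalNonAssocRing M] [Module k M]
  {I : Submodule k M}

theorem mul_sub_mul_mem (hI : IsIdeal k M I) {a a' b b' : M} (ha : a - a' ∈ I)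
    (hb : b - b' ∈ I) : a * b - a' * b' ∈ I := by
  have h : a * b - a' * b' = a * (b - b') + (a - a') * b' := by
    simp only [mul_sub, sub_mul]; abel
  exact h ▸ I.add_mem (hI a _ hb).1 (hI b' _ ha).2

/-- Indexed by the proof that `I` is an ideal so that the multiplication on `M ⧸ I` can be an
instance. -/
def Quotient (_ : IsIdeal k M I) : Type v := M ⧸ I

variable (hI : IsIdeal k M I)

namespace Quotient

instance : AddCommGroup hI.Quotient := inferInstanceAs (AddCommGroup (M ⧸ I))

instance : Module k hI.Quotient := inferInstanceAs (Module k (M ⧸ I))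

def mk : M →ₗ[k] hI.Quotient := I.mkQ

theorem mk_surjective : Surjective (mk hI) := I.mkQ_surjective

theorem mk_eq_zero {x : M} : mk hI x = 0 ↔ x ∈ I := Submodule.Quotient.mk_eq_zero I

instance [Finite M] : Finite hI.Quotient := Finite.of_surjective _ (mk_surjective hI)

instance : Mul hI.Quotient where
  mul := _root_.Quotient.map₂ (· * ·) fun _ _ ha _ _ hb => by
    simpa only [Submodule.quotientRel_def] using
      hI.mul_sub_mul_mem (I.quotientRel_def.1 ha) (I.quotientRel_def.1 hb)

theorem mk_mul (a b : M) : mk hI (a * b) = mk hI a * mk hI b := rfl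

instance : NonUnitalNonAssocRing hI.Quotient :=
  (mk_surjective hI).nonUnitalNonAssocRing (mk hI) (map_zero _) (map_add _) (mk_mul hI)
    (map_neg _) (map_sub _) (fun n x => map_nsmul (mk hI) n x) (fun n x => map_zsmul (mk hI) n x)

def mkₙₐ : M →ₙₐ[k] hI.Quotient :=
  { mk hI with map_zero' := (mk hI).map_zero, map_mul' := mk_mul hI }

theorem mkₙₐ_surjective : Surjective (mkₙₐ hI) := fun q => mk_surjective hI q

variable [SMulCommClass k M M] [IsScalarTower k M M]

instance : SMulCommClass k hI.Quotient hI.Quotient where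
  smul_comm r := (mk_surjective hI).forall₂.2 fun a b => by
    change r • (mk hI a * mk hI b) = mk hI a * r • mk hI b
    rw [← map_smul, ← mk_mul, ← mk_mul, ← map_smul, mul_smul_comm]

instance : IsScalarTower k hI.Quotient hI.Quotient where
  smul_assoc r := (mk_surjective hI).forall₂.2 fun a b => by
    change (r • mk hI a) * mk hI b = r • (mk hI a * mk hI b)
    rw [← map_smul, ← mk_mul, ← mk_mul, ← map_smul, smul_mul_assoc]

end Quotient

theorem card_quotient_le [Finite M] : Nat.card hI.Quotient ≤ Nat.card M :=
  Nat.card_le_card_of_surjective _ (Quotient.mk_surjective hI)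

theorem card_quotient_lt [Finite M] (h : I ≠ ⊥) : Nat.card hI.Quotient < Nat.card M := by
  have : Nontrivial I := Submodule.nontrivial_iff_ne_bot.2 h
  rw [I.card_eq_card_quotient_mul_card]
  exact lt_mul_left Nat.card_pos Finite.one_lt_card

end IsIdeal

theorem NonUnitalSubalgebra.card_lt_of_ne_top {k : Type u} [CommSemiring k] {A : Type v}
    [NonUnitalNonAssocSemiring A] [Module k A] [SMulCommClass k A A] [IsScalarTower k A A]
    [Finite A] {R : NonUnitalSubalgebra k A} (h : R ≠ ⊤) : Nat.card R < Nat.card A := by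
  obtain ⟨x, hx⟩ := SetLike.exists_not_mem_of_ne_top R h
  exact Finite.card_subtype_lt hx

section Sections

variable {k : Type u} [CommRing k]
  {A : Type v} [NonUnitalNonAssocRing A] [Module k A] [SMulCommClass k A A] [IsScalarTower k A A]
  {B : Type w} [NonUnitalNonAssocRing B] [Module k B] [SMulCommClass k B B] [IsScalarTower k B B]
  {C : Type x} [NonUnitalNonAssocRing C] [Module k C] [SMulCommClass k C C] [IsScalarTower k C C]

variable (k A) in
theorem isSection_self : IsSection k A A :=
  ⟨⊤, NonUnitalSubalgebraClass.subtype ⊤, fun a => ⟨⟨a, NonUnitalAlgebra.mem_top⟩, rfl⟩⟩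

theorem IsSection.finite [Finite A] (h : IsSection k A B) : Finite B :=
  let ⟨_, φ, hφ⟩ := h
  Finite.of_surjective φ hφ

theorem IsSection.trans (hAB : IsSection k A B) (hBC : IsSection k B C) : IsSection k A C := by
  obtain ⟨R, φ, hφ⟩ := hAB
  obtain ⟨R', ψ, hψ⟩ := hBC
  let P : NonUnitalSubalgebra k A := (R'.comap φ).map (NonUnitalSubalgebraClass.subtype R)
  have hPR : P ≤ R := by
    rintro _ ⟨r, -, rfl⟩
    exact r.2
  have hφP (p : P) : φ (NonUnitalSubalgebra.inclusion hPR p) ∈ R' := by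
    obtain ⟨_, ⟨r, hr, rfl⟩⟩ := p
    exact hr
  refine ⟨P, ψ.comp (NonUnitalAlgHom.codRestrict
    (φ.comp (NonUnitalSubalgebra.inclusion hPR)) R' hφP), fun c => ?_⟩
  obtain ⟨b, rfl⟩ := hψ c
  obtain ⟨r, hr⟩ := hφ b
  refine ⟨⟨r, r, show φ r ∈ R' from hr ▸ b.2, rfl⟩, congrArg ψ (Subtype.ext hr)⟩

theorem isSection_quotient (R : NonUnitalSubalgebra k A) {I : Submodule k R}
    (hI : IsIdeal k R I) : IsSection k A hI.Quotient :=
  ⟨R, IsIdeal.Quotient.mkₙₐ hI, IsIdeal.Quotient.mkₙₐ_surjective hI⟩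

end Sections

section Critical

variable {k : Type u} [CommRing k]
  {A : Type v} [NonUnitalNonAssocRing A] [Module k A] [SMulCommClass k A A] [IsScalarTower k A A]
  {R : NonUnitalSubalgebra k A} {I : Submodule k R}

theorem IsIdeal.sectionPI_of_isPI_quotient (hI : IsIdeal k R I) {f : FreeAlg k}
    (h : IsPI k hI.Quotient f) : SectionPI k A R I f := fun v =>
  (IsIdeal.Quotient.mk_eq_zero hI).1 <|
    h ((IsIdeal.Quotient.mkₙₐ hI).comp (FreeNonUnitalNonAssocAlgebra.lift k v))

theorem IsIdeal.card_quotient_lt_of_proper [Finite A] (hI : IsIdeal k R I)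
    (hRI : ¬(R = ⊤ ∧ I = ⊥)) : Nat.card hI.Quotient < Nat.card A := by
  by_cases hR : R = ⊤
  · subst hR
    calc Nat.card hI.Quotient < Nat.card (⊤ : NonUnitalSubalgebra k A) :=
          hI.card_quotient_lt fun hI' => hRI ⟨rfl, hI'⟩
      _ ≤ Nat.card A := Nat.card_le_card_of_injective _ Subtype.val_injective
  · calc Nat.card hI.Quotient ≤ Nat.card R := hI.card_quotient_le
      _ < Nat.card A := NonUnitalSubalgebra.card_lt_of_ne_top hR

theorem IsSection.isPI_of_forall_isCritical [Finite A] {f : FreeAlg k}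
    (hf : ∀ (S : Type v) [NonUnitalNonAssocRing S] [Module k S] [SMulCommClass k S S]
      [IsScalarTower k S S], IsSection k A S → IsCritical k S → IsPI k S f)
    {B : Type v} [NonUnitalNonAssocRing B] [Module k B] [SMulCommClass k B B]
    [IsScalarTower k B B] (hB : IsSection k A B) : IsPI k B f := by
  have := hB.finite
  induction h : Nat.card B using Nat.strong_induction_on generalizing B with
  | _ n ih =>
  by_contra hBf
  have hcrit : ¬IsCritical k B := fun hcrit => hBf (hf B hB hcrit)
  obtain ⟨R, I, hI, hRI, hRIf⟩ : ∃ (R : NonUnitalSubalgebra k B) (I : Submodule k R),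
      IsIdeal k R I ∧ ¬(R = ⊤ ∧ I = ⊥) ∧ ¬SectionPI k B R I f := by
    by_contra hnone
    exact hcrit ⟨f, hBf, fun R I hI hRI => not_not.1 fun h => hnone ⟨R, I, hI, hRI, h⟩⟩
  have hQ : IsSection k A hI.Quotient := hB.trans (isSection_quotient R hI)
  exact hRIf <| hI.sectionPI_of_isPI_quotient <|
    ih _ (h ▸ hI.card_quotient_lt_of_proper hRI) hQ inferInstance rfl

end Critical

/-- If `A` is finite and `f` is a polynomial identity of every
critical section of `A` (sections of `A` include `A` itself, with zero ideal),
then `f` is a polynomial identity of `A`: every finite algebra belongs to the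
variety generated by its critical sections. -/
theorem pi_of_critical_sections (k : Type u) [CommRing k]
    (A : Type v) [NonUnitalNonAssocRing A] [Module k A] [SMulCommClass k A A]
    [IsScalarTower k A A] [Finite A]
    (f : FreeAlg k)
    (hf : ∀ (S : Type v) [NonUnitalNonAssocRing S] [Module k S] [SMulCommClass k S S]
      [IsScalarTower k S S], IsSection k A S → IsCritical k S → IsPI k S f) :
    IsPI k A f :=
  (isSection_self k A).isPI_of_forall_isCritical hf
end
end

section
/- Let A and A' be finite non-unital, non-associative k-algebras with Id(A') ⊆ Id(A). Then there exist n ∈ ℕ, a subalgebra B of the direct power (A')^n, and an ideal C of B such that A ≅ B/C as k-algebras; that is, A is isomorphic to a section of a finite direct power of A'. -/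
universe u v w x
open Function
noncomputable section

/-- Evaluation at a coordinate, as a non-unital algebra hom. -/
def evalHom (k : Type u) [CommRing k] (A' : Type v) [NonUnitalNonAssocRing A'] [Module k A']
    (n : ℕ) (j : Fin n) : (Fin n → A') →ₙₐ[k] A' where
  toFun v := v j
  map_smul' _ _ := rfl
  map_zero' := rfl
  map_add' _ _ := rfl
  map_mul' _ _ := rfl

set_option maxHeartbeats 1000000 in
open FreeNonUnitalNonAssocAlgebra in
/-- If `A, A'` are finite algebras and `Id(A') ⊆ Id(A)`, then `A`
is isomorphic to a section of a finite direct power of `A'`: there are `n : ℕ`, a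
subalgebra `B` of `(A')ⁿ` and an ideal `C` of `B` with `A ≅ B/C` (encoded by a
surjective homomorphism `B → A` whose kernel is `C`). -/
theorem section_of_power (k : Type u) [CommRing k]
    (A' : Type v) [NonUnitalNonAssocRing A'] [Module k A'] [SMulCommClass k A' A']
    [IsScalarTower k A' A'] [Finite A']
    (A : Type v) [NonUnitalNonAssocRing A] [Module k A] [SMulCommClass k A A]
    [IsScalarTower k A A] [Finite A]
    (hPI : Ids k A' ⊆ Ids k A) :
    ∃ (n : ℕ) (B : NonUnitalSubalgebra k (Fin n → A')) (C : Submodule k ↥B)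
      (φ : ↥B →ₙₐ[k] A),
      IsIdeal k ↥B C ∧ Surjective φ ∧ (∀ b : ↥B, φ b = 0 ↔ b ∈ C) := by
  classical
  obtain ⟨m, ⟨e⟩⟩ := Finite.exists_equiv_fin A
  obtain ⟨n, ⟨en⟩⟩ := Finite.exists_equiv_fin (Fin m → A')
  -- evaluation hom at `a_i := e.symm i`
  set π : FreeAlg k →ₙₐ[k] A :=
    lift k (fun i => if h : i < m then e.symm ⟨i, h⟩ else 0) with hπdef
  -- evaluation hom into `A'` determined by `v : Fin m → A'`
  set ψ : (Fin m → A') → (FreeAlg k →ₙₐ[k] A') :=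
    fun v => lift k (fun i => if h : i < m then v ⟨i, h⟩ else 0) with hψdef
  -- substitution killing variables `x_i`, `i ≥ m`
  set σ : FreeAlg k →ₙₐ[k] FreeAlg k :=
    lift k (fun i => if i < m then of k i else 0) with hσdef
  -- the diagonal hom into the finite power of `A'`
  set Ψ : FreeAlg k →ₙₐ[k] (Fin n → A') :=
    lift k (fun i j => ψ (en.symm j) (σ (of k i))) with hΨdef
  have hΨeval : ∀ (f : FreeAlg k) (j : Fin n), Ψ f j = ψ (en.symm j) (σ f) := by
    intro f j
    have : (evalHom k A' n j).comp Ψ = (ψ (en.symm j)).comp σ := by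
      apply hom_ext
      intro i
      simp [Ψ, evalHom]
    exact DFunLike.congr_fun this f
  -- π absorbs σ
  have hπσ : ∀ f, π (σ f) = π f := by
    intro f
    have : π.comp σ = π := by
      apply hom_ext
      intro i
      by_cases h : i < m <;> simp [π, σ, h]
    exact DFunLike.congr_fun this f
  -- the kernel inclusion
  have hker : ∀ f : FreeAlg k, Ψ f = 0 → π f = 0 := by
    intro f hf
    have hσf : σ f ∈ Ids k A' := by
      intro φ'
      set v : Fin m → A' := fun j => φ' (of k (j : ℕ)) with hv
      have h1 : φ'.comp σ = (ψ v).comp σ := by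
        apply hom_ext
        intro i
        by_cases h : i < m <;> simp [σ, ψ, h, v]
      have h2 : φ' (σ f) = ψ v (σ f) := DFunLike.congr_fun h1 f
      have h3 : ψ (en.symm (en v)) (σ f) = 0 := by
        have := congr_fun hf (en v)
        rw [hΨeval] at this
        simpa using this
      rw [h2, ← Equiv.symm_apply_apply en v]
      exact h3
    have : σ f ∈ Ids k A := hPI hσf
    have := this π
    rwa [hπσ] at this
  have hker' : ∀ f g : FreeAlg k, Ψ f = Ψ g → π f = π g := by
    intro f g h
    have : Ψ (f - g) = 0 := by rw [map_sub, h, sub_self]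
    have := hker _ this
    rw [map_sub, sub_eq_zero] at this
    exact this
  -- the subalgebra and the quotient map
  set B : NonUnitalSubalgebra k (Fin n → A') := NonUnitalAlgHom.range Ψ with hB
  have hmem : ∀ b : ↥B, ∃ f : FreeAlg k, Ψ f = (b : Fin n → A') := by
    intro b
    exact (NonUnitalAlgHom.mem_range Ψ).mp b.2
  set φ0 : ↥B → A := fun b => π (hmem b).choose with hφ0
  have hφ0eq : ∀ (b : ↥B) (f : FreeAlg k), Ψ f = (b : Fin n → A') → φ0 b = π f := by
    intro b f hf
    exact hker' _ _ ((hmem b).choose_spec.trans hf.symm)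
  have hφ0Ψ : ∀ f : FreeAlg k, φ0 ⟨Ψ f, NonUnitalAlgHom.mem_range_self Ψ f⟩ = π f :=
    fun f => hφ0eq _ f rfl
  set φ : ↥B →ₙₐ[k] A :=
    { toFun := φ0
      map_smul' := by
        intro c b
        obtain ⟨f, hf⟩ := hmem b
        show φ0 (c • b) = (MonoidHom.id k) c • φ0 b
        rw [hφ0eq b f hf, hφ0eq (c • b) (c • f) (by rw [map_smul, hf]; rfl), map_smul]
        rfl
      map_zero' := by
        show φ0 0 = 0
        rw [hφ0eq 0 0 (by simp), map_zero]
      map_add' := by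
        intro b c
        obtain ⟨f, hf⟩ := hmem b
        obtain ⟨g, hg⟩ := hmem c
        show φ0 (b + c) = φ0 b + φ0 c
        rw [hφ0eq b f hf, hφ0eq c g hg,
          hφ0eq (b + c) (f + g) (by rw [map_add, hf, hg]; rfl), map_add]
      map_mul' := by
        intro b c
        obtain ⟨f, hf⟩ := hmem b
        obtain ⟨g, hg⟩ := hmem c
        show φ0 (b * c) = φ0 b * φ0 c
        rw [hφ0eq b f hf, hφ0eq c g hg,
          hφ0eq (b * c) (f * g) (by rw [map_mul, hf, hg]; rfl), map_mul] } with hφdef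
  have hφapp : ∀ (b : ↥B) (f : FreeAlg k), Ψ f = (b : Fin n → A') → φ b = π f := hφ0eq
  -- the kernel ideal
  set C : Submodule k ↥B :=
    { carrier := {b | φ b = 0}
      add_mem' := by
        intro a b ha hb
        simp only [Set.mem_setOf_eq] at *
        rw [map_add, ha, hb, add_zero]
      zero_mem' := by simp only [Set.mem_setOf_eq, map_zero]
      smul_mem' := by
        intro c b hb
        simp only [Set.mem_setOf_eq] at *
        rw [map_smul, hb, smul_zero] } with hC
  refine ⟨n, B, C, φ, ?_, ?_, ?_⟩
  · intro a x hx
    have hx' : φ x = 0 := hx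
    constructor
    · show φ (a * x) = 0
      rw [map_mul, hx', mul_zero]
    · show φ (x * a) = 0
      rw [map_mul, hx', zero_mul]
  · intro a
    refine ⟨⟨Ψ (of k ((e a : Fin m) : ℕ)), NonUnitalAlgHom.mem_range_self Ψ _⟩, ?_⟩
    rw [hφapp _ (of k ((e a : Fin m) : ℕ)) rfl]
    have h : ((e a : Fin m) : ℕ) < m := (e a).2
    simp [π, h]
  · intro b
    exact Iff.rfl
end
end

section
/- Let A and A' be finite non-unital, non-associative k-algebras, with A prime and Id(A') ⊆ Id(A). Then A is isomorphic to a section of A': there exist a subalgebra R of A' and an ideal I of R such that A ≅ R/I as k-algebras. -/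
universe u v w x
open Function
noncomputable section

/-- Number of occurrences of the variable `i` in a free-magma word. -/
def varCount : FreeMagma ℕ → ℕ → ℕ
  | FreeMagma.of x, i => if x = i then 1 else 0
  | FreeMagma.mul a b, i => varCount a i + varCount b i

/-- `f` is multilinear in the first `m` variables `x₁, …, x_m`: it is a `k`-linear
combination of monomials in each of which every one of the first `m` variables occurs
exactly once and no other variable occurs. -/
def IsMultilinear (k : Type u) [CommRing k] (m : ℕ) (f : FreeAlg k) : Prop :=
  f ∈ Submodule.span k {w : FreeAlg k |
    ∃ u : FreeMagma ℕ, (∀ i, varCount u i = if i < m then 1 else 0) ∧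
      w = FreeMagma.lift (FreeNonUnitalNonAssocAlgebra.of k) u}
/-- The product `S·T` of two subsets of `A`: the `k`-span of all values
`f(s, t, a₁, …, a_t)` of polynomials `f` multilinear in `x₁, …, x_{2+t}`,
where `s ∈ S`, `t ∈ T` and the remaining arguments run over `A`. -/
def mulSet (k : Type u) [CommRing k] (A : Type v) [NonUnitalNonAssocRing A] [Module k A]
    [SMulCommClass k A A] [IsScalarTower k A A] (S T : Set A) : Submodule k A :=
  Submodule.span k {y : A | ∃ (t : ℕ) (f : FreeAlg k), IsMultilinear k (2 + t) f ∧
    ∃ v : ℕ → A, v 0 ∈ S ∧ v 1 ∈ T ∧ FreeNonUnitalNonAssocAlgebra.lift k v f = y}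
/-- `A` is a prime algebra: `I·J ≠ 0` for all nonzero ideals `I, J` of `A`. -/
def IsPrimeAlg (k : Type u) [CommRing k] (A : Type v) [NonUnitalNonAssocRing A] [Module k A]
    [SMulCommClass k A A] [IsScalarTower k A A] : Prop :=
  ∀ I J : Submodule k A, IsIdeal k A I → IsIdeal k A J → I ≠ ⊥ → J ≠ ⊥ →
    mulSet k A (I : Set A) (J : Set A) ≠ ⊥


/-!
Enumerate `A` by the first `n` variables, so that `π = lift e : F → A` is onto. If some
homomorphism `ψ : F → A'` has `ker ψ ⊆ ker π`, then `π` factors through `ψ (F) ⊆ A'` and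
`A ≅ ψ (F) / ker` is the required section. Otherwise no `ker ψ` is contained in `ker π`. Up to
truncation to the first `n` variables there are only finitely many `ψ`, and, `A` being prime,
finitely many ideals of `F` not contained in `ker π` have an intersection not contained in
`ker π` (it contains a product of the ideals). An element `g` of the intersection of the `ker ψ`
with `π g ≠ 0` becomes, after truncation, an identity of `A'` that is not an identity of `A`.
-/

open FreeNonUnitalNonAssocAlgebra

section Ideals

variable {k : Type u} [CommRing k] {B : Type v} [NonUnitalNonAssocRing B] [Module k B]
  {C : Type w} [NonUnitalNonAssocRing C] [Module k C]

lemma isIdeal_top : IsIdeal k B ⊤ := fun _ _ _ => ⟨trivial, trivial⟩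

lemma IsIdeal.inf {K N : Submodule k B} (hK : IsIdeal k B K) (hN : IsIdeal k B N) :
    IsIdeal k B (K ⊓ N) := fun a x hx =>
  ⟨⟨(hK a x hx.1).1, (hN a x hx.2).1⟩, ⟨(hK a x hx.1).2, (hN a x hx.2).2⟩⟩

lemma isIdeal_ker (φ : B →ₙₐ[k] C) : IsIdeal k B (LinearMap.ker (φ : B →ₗ[k] C)) :=
  fun a x hx => by simp_all [LinearMap.mem_ker]

lemma IsIdeal.map {φ : B →ₙₐ[k] C} (hφ : Surjective φ) {K : Submodule k B}
    (hK : IsIdeal k B K) : IsIdeal k C (K.map (φ : B →ₗ[k] C)) := by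
  rintro c _ ⟨x, hx, rfl⟩
  obtain ⟨b, rfl⟩ := hφ c
  exact ⟨⟨b * x, (hK b x hx).1, map_mul φ b x⟩, ⟨x * b, (hK b x hx).2, map_mul φ x b⟩⟩

lemma FreeMagma.lift_mem_of_varCount_ne_zero {I : Submodule k B} (hI : IsIdeal k B I)
    {v : ℕ → B} {j : ℕ} (hv : v j ∈ I) (u : FreeMagma ℕ) (hu : varCount u j ≠ 0) :
    FreeMagma.lift v u ∈ I := by
  induction u with
  | ih1 i =>
    obtain rfl : i = j := by by_contra h; simp [varCount, h] at hu
    exact hv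
  | ih2 a b iha ihb =>
    rw [map_mul]
    by_cases ha : varCount a j = 0
    · exact (hI _ _ (ihb (by simpa [varCount, ha] using hu))).1
    · exact (hI _ _ (iha ha)).2

end Ideals

section Evaluation

variable {k : Type u} [CommRing k]
  {B : Type v} [NonUnitalNonAssocRing B] [Module k B] [SMulCommClass k B B] [IsScalarTower k B B]
  {C : Type w} [NonUnitalNonAssocRing C] [Module k C] [SMulCommClass k C C] [IsScalarTower k C C]

lemma lift_freeMagmaLift_of (v : ℕ → B) (u : FreeMagma ℕ) :
    lift k v (FreeMagma.lift (of k) u) = FreeMagma.lift v u := by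
  induction u with
  | ih1 i => simp
  | ih2 a b iha ihb => simp only [map_mul, iha, ihb]

lemma IsMultilinear.lift_mem {m j : ℕ} {f : FreeAlg k} (hf : IsMultilinear k m f) (hj : j < m)
    {I : Submodule k B} (hI : IsIdeal k B I) {v : ℕ → B} (hv : v j ∈ I) : lift k v f ∈ I := by
  induction hf using Submodule.span_induction with
  | mem w hw =>
    obtain ⟨u, hu, rfl⟩ := hw
    rw [lift_freeMagmaLift_of]
    exact FreeMagma.lift_mem_of_varCount_ne_zero hI hv u (by simp [hu j, hj])
  | zero => simp
  | add x y _ _ hx hy => simpa using I.add_mem hx hy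
  | smul c x _ hx => simpa using I.smul_mem c hx

lemma NonUnitalAlgHom.apply_lift (φ : B →ₙₐ[k] C) (v : ℕ → B) (f : FreeAlg k) :
    φ (lift k v f) = lift k (φ ∘ v) f := by
  suffices φ.comp (lift k v) = lift k (φ ∘ v) from DFunLike.congr_fun this f
  exact hom_ext k fun i => by simp

end Evaluation

section Prime

variable {k : Type u} [CommRing k]
  {A : Type v} [NonUnitalNonAssocRing A] [Module k A] [SMulCommClass k A A] [IsScalarTower k A A]
  {B : Type w} [NonUnitalNonAssocRing B] [Module k B] [SMulCommClass k B B] [IsScalarTower k B B]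
  {π : B →ₙₐ[k] A}

lemma IsPrimeAlg.exists_mem_inf_ne_zero (hA : IsPrimeAlg k A) (hπ : Surjective π)
    {K N : Submodule k B} (hK : IsIdeal k B K) (hN : IsIdeal k B N)
    (hKπ : ∃ x ∈ K, π x ≠ 0) (hNπ : ∃ x ∈ N, π x ≠ 0) : ∃ x ∈ K ⊓ N, π x ≠ 0 := by
  have hne : ∀ {L : Submodule k B}, (∃ x ∈ L, π x ≠ 0) → L.map (π : B →ₗ[k] A) ≠ ⊥ := by
    rintro L ⟨x, hx, hπx⟩ h
    exact hπx ((Submodule.mem_bot k).1 (h ▸ Submodule.mem_map_of_mem hx))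
  obtain ⟨y, ⟨t, f, hf, v, ⟨x₀, hx₀, hπx₀⟩, ⟨x₁, hx₁, hπx₁⟩, rfl⟩, hy⟩ :=
    Set.not_subset.1 <| mt Submodule.span_eq_bot.2 <|
      hA _ _ (hK.map hπ) (hN.map hπ) (hne hKπ) (hne hNπ)
  rw [LinearMap.coe_coe] at hπx₀ hπx₁
  -- lift the arguments of `f` back to `B`, keeping the first two in `K` and `N`
  set w : ℕ → B := update (update (surjInv hπ ∘ v) 0 x₀) 1 x₁
  have hπw : π ∘ w = v := by
    funext i
    rcases i with _ | _ | i <;> simp [w, hπx₀, hπx₁, surjInv_eq hπ]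
  refine ⟨lift k w f, ⟨hf.lift_mem (j := 0) (by omega) hK ?_,
    hf.lift_mem (j := 1) (by omega) hN ?_⟩, ?_⟩
  · simpa [w] using hx₀
  · simpa [w] using hx₁
  · rwa [π.apply_lift, hπw]

lemma IsPrimeAlg.exists_forall_mem_ne_zero [Nontrivial A] (hA : IsPrimeAlg k A)
    (hπ : Surjective π) {ι : Type x} [Finite ι] (N : ι → Submodule k B)
    (hN : ∀ i, IsIdeal k B (N i)) (hNπ : ∀ i, ∃ x ∈ N i, π x ≠ 0) :
    ∃ x, (∀ i, x ∈ N i) ∧ π x ≠ 0 := by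
  have := Fintype.ofFinite ι
  obtain ⟨-, x, hx, hπx⟩ := Finset.inf_induction (s := Finset.univ) (f := N)
    (p := fun K => IsIdeal k B K ∧ ∃ x ∈ K, π x ≠ 0)
    ⟨isIdeal_top, by
      obtain ⟨a, ha⟩ := exists_ne (0 : A)
      exact ⟨surjInv hπ a, trivial, by rwa [surjInv_eq hπ]⟩⟩
    (fun K hK L hL => ⟨hK.1.inf hL.1, hA.exists_mem_inf_ne_zero hπ hK.1 hL.1 hK.2 hL.2⟩)
    (fun i _ => ⟨hN i, hNπ i⟩)
  exact ⟨x, fun i => Finset.inf_le (f := N) (Finset.mem_univ i) hx, hπx⟩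

end Prime

section Factor

variable {k : Type u} [CommRing k]
  {B : Type v} [NonUnitalNonAssocRing B] [Module k B]
  {C : Type w} [NonUnitalNonAssocRing C] [Module k C]
  {D : Type x} [NonUnitalNonAssocRing D] [Module k D]
  {ψ : B →ₙₐ[k] C} {π : B →ₙₐ[k] D}

lemma NonUnitalAlgHom.apply_eq_of_ker_le (h : ∀ b, ψ b = 0 → π b = 0) {b b' : B}
    (hb : ψ b = ψ b') : π b = π b' := by
  rw [← sub_eq_zero, ← map_sub] at hb ⊢
  exact h _ hb

def NonUnitalAlgHom.liftOfSurjective (hψ : Surjective ψ) (h : ∀ b, ψ b = 0 → π b = 0) :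
    C →ₙₐ[k] D where
  toFun c := π (surjInv hψ c)
  map_smul' c x := by
    rw [MonoidHom.id_apply, ← map_smul]
    exact apply_eq_of_ker_le h (by rw [map_smul, surjInv_eq hψ, surjInv_eq hψ])
  map_zero' := by
    rw [← map_zero π]
    exact apply_eq_of_ker_le h (by rw [map_zero, surjInv_eq hψ])
  map_add' x y := by
    rw [← map_add]
    exact apply_eq_of_ker_le h (by rw [map_add, surjInv_eq hψ, surjInv_eq hψ, surjInv_eq hψ])
  map_mul' x y := by
    rw [← map_mul]
    exact apply_eq_of_ker_le h (by rw [map_mul, surjInv_eq hψ, surjInv_eq hψ, surjInv_eq hψ])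

lemma NonUnitalAlgHom.liftOfSurjective_apply (hψ : Surjective ψ) (h : ∀ b, ψ b = 0 → π b = 0)
    (b : B) : liftOfSurjective hψ h (ψ b) = π b :=
  apply_eq_of_ker_le h (surjInv_eq hψ _)

theorem exists_section_of_ker_le (hπ : Surjective π) (ψ : B →ₙₐ[k] C)
    (h : ∀ b, ψ b = 0 → π b = 0) :
    ∃ (R : NonUnitalSubalgebra k C) (I : Submodule k R) (φ : R →ₙₐ[k] D),
      IsIdeal k R I ∧ Surjective φ ∧ ∀ x, φ x = 0 ↔ x ∈ I := by
  have hψ : Surjective (NonUnitalAlgHom.rangeRestrict ψ) := by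
    rintro ⟨_, b, rfl⟩
    exact ⟨b, rfl⟩
  set φ := NonUnitalAlgHom.liftOfSurjective hψ (π := π)
    fun b hb => h b (congrArg Subtype.val hb)
  refine ⟨NonUnitalAlgHom.range ψ, LinearMap.ker (φ : NonUnitalAlgHom.range ψ →ₗ[k] D), φ,
    isIdeal_ker φ, fun d => ?_, fun _ => Iff.rfl⟩
  obtain ⟨b, rfl⟩ := hπ d
  exact ⟨NonUnitalAlgHom.rangeRestrict ψ b, NonUnitalAlgHom.liftOfSurjective_apply _ _ b⟩

end Factor

lemma Finite.exists_surjective_nat_eventually_zero (A : Type v) [Zero A] [Finite A] :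
    ∃ (n : ℕ) (e : ℕ → A), Surjective e ∧ ∀ i, n ≤ i → e i = 0 := by
  obtain ⟨n, ⟨eqv⟩⟩ := Finite.exists_equiv_fin A
  refine ⟨n, fun i => if h : i < n then eqv.symm ⟨i, h⟩ else 0, fun a => ⟨eqv a, by simp⟩,
    fun i hi => dif_neg (by omega)⟩

def FreeAlg.truncate (k : Type u) [CommRing k] (n : ℕ) : FreeAlg k →ₙₐ[k] FreeAlg k :=
  lift k fun i => if i < n then of k i else 0

lemma FreeAlg.comp_truncate {k : Type u} [CommRing k] {B : Type v} [NonUnitalNonAssocRing B]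
    [Module k B] [SMulCommClass k B B] [IsScalarTower k B B] (n : ℕ) (ψ : FreeAlg k →ₙₐ[k] B) :
    ψ.comp (truncate k n) = lift k fun i => if i < n then ψ (of k i) else 0 :=
  hom_ext k fun i => by by_cases hi : i < n <;> simp [truncate, hi]

lemma FreeAlg.lift_comp_truncate {k : Type u} [CommRing k] {B : Type v}
    [NonUnitalNonAssocRing B] [Module k B] [SMulCommClass k B B] [IsScalarTower k B B] {n : ℕ}
    {e : ℕ → B} (he : ∀ i, n ≤ i → e i = 0) : (lift k e).comp (truncate k n) = lift k e := by
  rw [comp_truncate]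
  refine hom_ext k fun i => ?_
  by_cases hi : i < n
  · simp [hi]
  · simp [hi, he i (not_lt.1 hi)]

/-- If `A, A'` are finite algebras, `A` is prime and
`Id(A') ⊆ Id(A)`, then `A` is isomorphic to a section of `A'`: there are a
subalgebra `R` of `A'` and an ideal `I` of `R` with `A ≅ R/I` (encoded by a
surjective homomorphism `R → A` whose kernel is the ideal `I`). -/
theorem prime_section (k : Type u) [CommRing k]
    (A : Type v) [NonUnitalNonAssocRing A] [Module k A] [SMulCommClass k A A]
    [IsScalarTower k A A] [Finite A]
    (A' : Type w) [NonUnitalNonAssocRing A'] [Module k A'] [SMulCommClass k A' A']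
    [IsScalarTower k A' A'] [Finite A']
    (hA : IsPrimeAlg k A) (hPI : Ids k A' ⊆ Ids k A) :
    ∃ (R : NonUnitalSubalgebra k A') (I : Submodule k ↥R) (φ : ↥R →ₙₐ[k] A),
      IsIdeal k ↥R I ∧ Surjective φ ∧ (∀ x : ↥R, φ x = 0 ↔ x ∈ I) := by
  obtain ⟨n, e, he, he0⟩ := Finite.exists_surjective_nat_eventually_zero A
  set π := lift k e
  have hπ : Surjective π := fun a => ⟨of k _, (lift_of_apply k e _).trans (surjInv_eq he a)⟩
  by_cases h : ∃ ψ : FreeAlg k →ₙₐ[k] A', ∀ f, ψ f = 0 → π f = 0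
  · obtain ⟨ψ, hψ⟩ := h
    exact exists_section_of_ker_le hπ ψ hψ
  push Not at h
  exfalso
  let ψ (v : Fin n → A') : FreeAlg k →ₙₐ[k] A' :=
    lift k fun i => if hi : i < n then v ⟨i, hi⟩ else 0
  have : Nontrivial A := by
    obtain ⟨f, -, hf⟩ := h 0
    exact nontrivial_of_ne _ _ hf
  obtain ⟨g, hg, hπg⟩ := hA.exists_forall_mem_ne_zero hπ
    (fun v => LinearMap.ker (ψ v : FreeAlg k →ₗ[k] A')) (fun v => isIdeal_ker _)
    fun v => let ⟨f, hf, hπf⟩ := h (ψ v); ⟨f, by simpa using hf, hπf⟩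
  -- every homomorphism `χ` into `A'`, composed with truncation, is one of the `ψ v`
  have hσg : FreeAlg.truncate k n g ∈ Ids k A' := fun χ => by
    rw [← NonUnitalAlgHom.comp_apply, FreeAlg.comp_truncate]
    exact hg fun i => χ (of k i)
  have hπσg : π (FreeAlg.truncate k n g) = 0 := hPI hσg π
  rw [← NonUnitalAlgHom.comp_apply, FreeAlg.lift_comp_truncate he0] at hπσg
  exact hπg hπσg
end
end

section
/- Let A and B be finite critical non-unital, non-associative k-algebras with Id(A) = Id(B), and assume that A is prime. Then B is prime and A ≅ B as k-algebras. -/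
universe u v w x
open Function
noncomputable section

set_option linter.unusedSectionVars false
set_option linter.unusedVariables false

section Helpers

open FreeNonUnitalNonAssocAlgebra

variable {k : Type u} [CommRing k]
variable {C : Type v} [NonUnitalNonAssocRing C] [Module k C] [SMulCommClass k C C]
  [IsScalarTower k C C]
variable {D : Type w} [NonUnitalNonAssocRing D] [Module k D] [SMulCommClass k D D]
  [IsScalarTower k D D]

/-- underlying linear map of a non-unital algebra hom -/
def toLin (θ : C →ₙₐ[k] D) : C →ₗ[k] D where
  toFun := θ
  map_add' := map_add θ
  map_smul' := map_smul θ

@[simp] lemma toLin_apply (θ : C →ₙₐ[k] D) (x : C) : toLin θ x = θ x := rfl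

lemma hom_lift (θ : C →ₙₐ[k] D) (w : ℕ → C) (f : FreeAlg k) :
    θ (lift k w f) = lift k (θ ∘ w) f := by
  have h : (θ.comp (lift k w)) = (lift k (θ ∘ w) : FreeAlg k →ₙₐ[k] D) := by
    apply hom_ext
    intro x
    simp
  exact DFunLike.congr_fun h f

lemma lift_magma (w : ℕ → C) (u : FreeMagma ℕ) :
    lift k w (FreeMagma.lift (of k) u) = FreeMagma.lift w u := by
  induction u with
  | ih1 x => simp
  | ih2 a b iha ihb => simp only [map_mul, iha, ihb]

lemma magma_eval_zero (w : ℕ → C) (ℓ : ℕ) (hw : w ℓ = 0) :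
    ∀ u : FreeMagma ℕ, varCount u ℓ ≠ 0 → FreeMagma.lift w u = 0 := by
  intro u
  induction u with
  | ih1 x =>
    intro h
    have hx : x = ℓ := by
      by_contra hne
      simp [varCount, hne] at h
    simp [hx, FreeMagma.lift_of, hw]
  | ih2 a b iha ihb =>
    intro h
    rw [map_mul]
    rcases Nat.eq_zero_or_pos (varCount a ℓ) with h0 | h0
    · have : varCount b ℓ ≠ 0 := by
        simp [varCount, h0] at h; omega
      rw [ihb this, mul_zero]
    · rw [iha (by omega), zero_mul]

lemma multilinear_eval_zero {m : ℕ} {f : FreeAlg k} (hf : IsMultilinear k m f)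
    (w : ℕ → C) (ℓ : ℕ) (hℓ : ℓ < m) (hw : w ℓ = 0) :
    lift k w f = 0 := by
  have hsub : {x : FreeAlg k |
      ∃ u : FreeMagma ℕ, (∀ i, varCount u i = if i < m then 1 else 0) ∧
        x = FreeMagma.lift (of k) u} ⊆ (LinearMap.ker (toLin (lift k w)) : Set (FreeAlg k)) := by
    rintro _ ⟨u, hu, rfl⟩
    simp only [SetLike.mem_coe, LinearMap.mem_ker, toLin_apply]
    rw [lift_magma]
    exact magma_eval_zero w ℓ hw u (by rw [hu ℓ]; simp [hℓ])
  have := Submodule.span_le.mpr hsub hf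
  simpa using this

lemma magma_eval_congr (w w' : ℕ → C) :
    ∀ u : FreeMagma ℕ, (∀ i, varCount u i ≠ 0 → w i = w' i) →
      FreeMagma.lift w u = FreeMagma.lift w' u := by
  intro u
  induction u with
  | ih1 x =>
    intro h
    simp only [FreeMagma.lift_of]
    exact h x (by simp [varCount])
  | ih2 a b iha ihb =>
    intro h
    rw [map_mul, map_mul, iha (fun i hi => h i (by simp [varCount]; omega)),
      ihb (fun i hi => h i (by simp [varCount]; omega))]

lemma multilinear_eval_congr {m : ℕ} {f : FreeAlg k} (hf : IsMultilinear k m f)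
    (w w' : ℕ → C) (h : ∀ i, i < m → w i = w' i) :
    lift k w f = lift k w' f := by
  have hsub : {x : FreeAlg k |
      ∃ u : FreeMagma ℕ, (∀ i, varCount u i = if i < m then 1 else 0) ∧
        x = FreeMagma.lift (of k) u} ⊆
      (LinearMap.ker (toLin (lift k w) - toLin (lift k w')) : Set (FreeAlg k)) := by
    rintro _ ⟨u, hu, rfl⟩
    simp only [SetLike.mem_coe, LinearMap.mem_ker, LinearMap.sub_apply, toLin_apply,
      sub_eq_zero]
    rw [lift_magma, lift_magma]
    refine magma_eval_congr w w' u fun i hi => ?_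
    refine h i ?_
    by_contra hge
    rw [hu i] at hi
    simp [hge] at hi
  have := Submodule.span_le.mpr hsub hf
  simp only [LinearMap.mem_ker, LinearMap.sub_apply, toLin_apply, sub_eq_zero] at this
  exact this

lemma varCount_mul (a b : FreeMagma ℕ) (i : ℕ) :
    varCount (a * b) i = varCount a i + varCount b i := rfl

lemma varCount_of (x i : ℕ) : varCount (FreeMagma.of x) i = if x = i then 1 else 0 := rfl

lemma IsMultilinear.mul_of {m : ℕ} {f : FreeAlg k} (hf : IsMultilinear k m f) :
    IsMultilinear k (m + 1) (f * of k m) := by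
  have h1 : f * of k m = LinearMap.mulRight k (of k m) f := rfl
  rw [IsMultilinear, h1]
  have h2 : LinearMap.mulRight k (of k m) f ∈
      Submodule.map (LinearMap.mulRight k (of k m))
        (Submodule.span k {w : FreeAlg k |
          ∃ u : FreeMagma ℕ, (∀ i, varCount u i = if i < m then 1 else 0) ∧
            w = FreeMagma.lift (of k) u}) :=
    Submodule.mem_map_of_mem hf
  rw [Submodule.map_span] at h2
  refine Submodule.span_le.mpr ?_ h2
  rintro _ ⟨_, ⟨u, hu, rfl⟩, rfl⟩
  refine Submodule.subset_span ⟨u * FreeMagma.of m, fun i => ?_, ?_⟩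
  · rw [varCount_mul, varCount_of, hu i]
    by_cases h' : m = i
    · subst h'; simp
    · by_cases h : i < m
      · simp [h, h', Nat.lt_succ_iff, Nat.le_of_lt h]
      · have hh : ¬ i ≤ m := by omega
        simp [h, h', Nat.lt_succ_iff, hh]
  · simp only [LinearMap.mulRight_apply, map_mul, FreeMagma.lift_of]

lemma IsMultilinear.of_mul {m : ℕ} {f : FreeAlg k} (hf : IsMultilinear k m f) :
    IsMultilinear k (m + 1) (of k m * f) := by
  have h1 : of k m * f = LinearMap.mulLeft k (of k m) f := rfl
  rw [IsMultilinear, h1]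
  have h2 : LinearMap.mulLeft k (of k m) f ∈
      Submodule.map (LinearMap.mulLeft k (of k m))
        (Submodule.span k {w : FreeAlg k |
          ∃ u : FreeMagma ℕ, (∀ i, varCount u i = if i < m then 1 else 0) ∧
            w = FreeMagma.lift (of k) u}) :=
    Submodule.mem_map_of_mem hf
  rw [Submodule.map_span] at h2
  refine Submodule.span_le.mpr ?_ h2
  rintro _ ⟨_, ⟨u, hu, rfl⟩, rfl⟩
  refine Submodule.subset_span ⟨FreeMagma.of m * u, fun i => ?_, ?_⟩
  · rw [varCount_mul, varCount_of, hu i]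
    by_cases h' : m = i
    · subst h'; simp
    · by_cases h : i < m
      · simp [h, h', Nat.lt_succ_iff, Nat.le_of_lt h]
      · have hh : ¬ i ≤ m := by omega
        simp [h, h', Nat.lt_succ_iff, hh]
  · simp only [LinearMap.mulLeft_apply, map_mul, FreeMagma.lift_of]

lemma mem_mulSet_gen {S T : Set C} {t : ℕ} {f : FreeAlg k} (hf : IsMultilinear k (2 + t) f)
    {w : ℕ → C} (h0 : w 0 ∈ S) (h1 : w 1 ∈ T) :
    lift k w f ∈ mulSet k C S T :=
  Submodule.subset_span ⟨t, f, hf, w, h0, h1, rfl⟩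

lemma mulSet_isIdeal (S T : Set C) : IsIdeal k C (mulSet k C S T) := by
  intro a x hx
  refine Submodule.span_induction ?_ ?_ ?_ ?_ hx
  · rintro y ⟨t, f, hf, w, h0, h1, rfl⟩
    constructor
    · -- a * y
      have hml : IsMultilinear k (2 + (t + 1)) (of k (2 + t) * f) := hf.of_mul
      have he : lift k (Function.update w (2 + t) a) (of k (2 + t) * f)
          = a * lift k w f := by
        rw [map_mul, lift_of_apply, Function.update_self]
        congr 1
        exact multilinear_eval_congr hf _ _ fun i hi =>
          Function.update_of_ne (by omega) _ _
      rw [← he]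
      exact mem_mulSet_gen hml
        (by rw [Function.update_of_ne (by omega)]; exact h0)
        (by rw [Function.update_of_ne (by omega)]; exact h1)
    · have hml : IsMultilinear k (2 + (t + 1)) (f * of k (2 + t)) := hf.mul_of
      have he : lift k (Function.update w (2 + t) a) (f * of k (2 + t))
          = lift k w f * a := by
        rw [map_mul, lift_of_apply, Function.update_self]
        congr 1
        exact multilinear_eval_congr hf _ _ fun i hi =>
          Function.update_of_ne (by omega) _ _
      rw [← he]
      exact mem_mulSet_gen hml
        (by rw [Function.update_of_ne (by omega)]; exact h0)
        (by rw [Function.update_of_ne (by omega)]; exact h1)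
  · constructor <;> simp
  · rintro y z _ _ ⟨hy1, hy2⟩ ⟨hz1, hz2⟩
    constructor
    · rw [mul_add]; exact (mulSet k C S T).add_mem hy1 hz1
    · rw [add_mul]; exact (mulSet k C S T).add_mem hy2 hz2
  · rintro c y _ ⟨hy1, hy2⟩
    constructor
    · rw [mul_smul_comm]; exact (mulSet k C S T).smul_mem c hy1
    · rw [smul_mul_assoc]; exact (mulSet k C S T).smul_mem c hy2

lemma hom_mulSet (θ : C →ₙₐ[k] D) {S T : Set C} {y : C} (hy : y ∈ mulSet k C S T) :
    θ y ∈ mulSet k D (θ '' S) (θ '' T) := by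
  have : mulSet k C S T ≤ Submodule.comap (toLin θ) (mulSet k D (θ '' S) (θ '' T)) := by
    refine Submodule.span_le.mpr ?_
    rintro _ ⟨t, f, hf, w, h0, h1, rfl⟩
    simp only [Set.mem_setOf_eq, SetLike.mem_coe, Submodule.mem_comap, toLin_apply]
    rw [hom_lift]
    exact mem_mulSet_gen hf ⟨w 0, h0, rfl⟩ ⟨w 1, h1, rfl⟩
  exact this hy

lemma mulSet_mono {S S' T T' : Set C} (hS : S ⊆ S') (hT : T ⊆ T') :
    mulSet k C S T ≤ mulSet k C S' T' := by
  refine Submodule.span_mono ?_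
  rintro _ ⟨t, f, hf, w, h0, h1, rfl⟩
  exact ⟨t, f, hf, w, hS h0, hT h1, rfl⟩

end Helpers

section Key

open FreeNonUnitalNonAssocAlgebra

variable {k : Type u} [CommRing k]
variable {A : Type v} [NonUnitalNonAssocRing A] [Module k A] [SMulCommClass k A A]
  [IsScalarTower k A A]
variable {B : Type w} [NonUnitalNonAssocRing B] [Module k B] [SMulCommClass k B B]
  [IsScalarTower k B B]

lemma exists_good_subst [Finite A] [Finite B]
    (hprime : IsPrimeAlg k A) (hPI : Ids k A = Ids k B)
    (g : ℕ → A) (n₀ : A → ℕ) (hg : ∀ a, g (n₀ a) = a) :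
    ∃ v : A → B, ∀ f : FreeAlg k,
      lift k (fun n => v (g n)) f = 0 → lift k g f = 0 := by
  by_contra hcon
  push_neg at hcon
  set π : FreeAlg k →ₙₐ[k] A := lift k g with hπdef
  set lam : (A → B) → (FreeAlg k →ₙₐ[k] B) := fun v => lift k (fun n => v (g n)) with hlamdef
  have hπof : ∀ a : A, π (of k (n₀ a)) = a := by
    intro a; rw [hπdef, lift_of_apply, hg]
  have hπsurj : ∀ a : A, ∃ F, π F = a := fun a => ⟨of k (n₀ a), hπof a⟩
  set N : (A → B) → Submodule k A :=
    fun v => Submodule.map (toLin π) (LinearMap.ker (toLin (lam v))) with hNdef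
  have memN : ∀ v (y : A), y ∈ N v ↔ ∃ F, lam v F = 0 ∧ π F = y := by
    intro v y
    simp [hNdef, Submodule.mem_map, LinearMap.mem_ker]
  have hNne : ∀ v, N v ≠ ⊥ := by
    intro v
    obtain ⟨f, hf0, hfne⟩ := hcon v
    refine Submodule.ne_bot_iff _ |>.mpr ⟨π f, (memN v _).mpr ⟨f, hf0, rfl⟩, hfne⟩
  have hNideal : ∀ v, IsIdeal k A (N v) := by
    intro v a y hy
    obtain ⟨F, hF0, hFy⟩ := (memN v y).mp hy
    constructor
    · refine (memN v _).mpr ⟨of k (n₀ a) * F, ?_, ?_⟩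
      · rw [map_mul, hF0, mul_zero]
      · rw [map_mul, hπof, hFy]
    · refine (memN v _).mpr ⟨F * of k (n₀ a), ?_, ?_⟩
      · rw [map_mul, hF0, zero_mul]
      · rw [map_mul, hπof, hFy]
  -- the main finset induction
  have main : ∀ S : Finset (A → B), S.Nonempty → ∃ Q : Submodule k A,
      IsIdeal k A Q ∧ Q ≠ ⊥ ∧ ∀ y ∈ Q, ∃ F, (∀ v ∈ S, lam v F = 0) ∧ π F = y := by
    intro S hS
    induction hS using Finset.Nonempty.cons_induction with
    | singleton v =>
      refine ⟨N v, hNideal v, hNne v, ?_⟩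
      intro y hy
      obtain ⟨F, hF0, hFy⟩ := (memN v y).mp hy
      exact ⟨F, by simpa using hF0, hFy⟩
    | cons a S ha hS IH =>
      obtain ⟨Q, hQi, hQne, hQp⟩ := IH
      refine ⟨mulSet k A (N a) Q, mulSet_isIdeal _ _, hprime _ _ (hNideal a) hQi (hNne a) hQne, ?_⟩
      intro y hy
      -- span induction to produce preimages
      refine Submodule.span_induction ?_ ?_ ?_ ?_ hy
      · rintro z ⟨t, f, hf, wv, h0, h1, rfl⟩
        obtain ⟨F0, hF00, hF0w⟩ := (memN a _).mp h0
        obtain ⟨F1, hF10, hF1w⟩ := hQp _ h1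
        set W : ℕ → FreeAlg k := fun n =>
          if n = 0 then F0 else if n = 1 then F1 else of k (n₀ (wv n)) with hWdef
        have hπW : ∀ n, π (W n) = wv n := by
          intro n
          rcases Nat.eq_zero_or_pos n with h | h
          · simp [hWdef, h, hF0w]
          · rcases Nat.lt_or_ge n 2 with h2 | h2
            · have : n = 1 := by omega
              simp [hWdef, this, hF1w]
            · have h1' : n ≠ 0 := by omega
              have h2' : n ≠ 1 := by omega
              simp [hWdef, h1', h2', hπof]
        refine ⟨lift k W f, ?_, ?_⟩
        · intro v hv
          rcases Finset.mem_cons.mp hv with rfl | hvS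
          · rw [hom_lift]
            refine multilinear_eval_zero hf _ 0 (by omega) ?_
            simp [hWdef, hF00]
          · rw [hom_lift]
            refine multilinear_eval_zero hf _ 1 (by omega) ?_
            simp only [comp_apply, hWdef]
            simpa using hF10 v hvS
        · rw [hom_lift]
          have heq : ⇑π ∘ W = wv := funext hπW
          rw [heq]
      · exact ⟨0, fun v _ => map_zero _, map_zero _⟩
      · rintro y z _ _ ⟨F, hF0, hFy⟩ ⟨G, hG0, hGy⟩
        exact ⟨F + G, fun v hv => by rw [map_add, hF0 v hv, hG0 v hv, add_zero],
          by rw [map_add, hFy, hGy]⟩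
      · rintro c y _ ⟨F, hF0, hFy⟩
        exact ⟨c • F, fun v hv => by rw [map_smul, hF0 v hv, smul_zero],
          by rw [map_smul, hFy]⟩
  -- apply to univ and derive contradiction
  haveI : Nonempty B := ⟨0⟩
  haveI : Fintype (A → B) := Fintype.ofFinite _
  obtain ⟨Q, hQi, hQne, hQp⟩ := main Finset.univ Finset.univ_nonempty
  obtain ⟨y, hy, hyne⟩ := Submodule.ne_bot_iff _ |>.mp hQne
  obtain ⟨F, hF0, hFy⟩ := hQp y hy
  -- the substitution trick: F vanishes under every lam v, hence π F = 0
  have hIdB : IsPI k B (lift k (fun n => of k (n₀ (g n)) : ℕ → FreeAlg k) F) := by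
    intro φ
    have hcomp : φ.comp (lift k (fun n => of k (n₀ (g n)) : ℕ → FreeAlg k))
        = lam (fun a => φ (of k (n₀ a))) := by
      apply hom_ext
      intro x
      simp [hlamdef, lift_of_apply]
    have := DFunLike.congr_fun hcomp F
    simp only [NonUnitalAlgHom.comp_apply] at this
    rw [this]
    exact hF0 (fun a => φ (of k (n₀ a))) (Finset.mem_univ _)
  have hIdA : IsPI k A (lift k (fun n => of k (n₀ (g n)) : ℕ → FreeAlg k) F) := by
    have h1 : (lift k (fun n => of k (n₀ (g n)) : ℕ → FreeAlg k) F) ∈ Ids k B := hIdB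
    rw [← hPI] at h1
    exact h1
  have hπF : π F = 0 := by
    have hcomp : π.comp (lift k (fun n => of k (n₀ (g n)) : ℕ → FreeAlg k)) = π := by
      apply hom_ext
      intro x
      simp [lift_of_apply, hπof, hπdef, hg]
    have := DFunLike.congr_fun hcomp F
    simp only [NonUnitalAlgHom.comp_apply] at this
    rw [← this]
    exact hIdA π
  exact hyne (hFy ▸ hπF)

end Key

section MainProof
open FreeNonUnitalNonAssocAlgebra

/-- **Statement 16.** If two finite critical algebras generate the same variety
and `A` is prime, then `B` is prime and `A ≅ B` as `k`-algebras. -/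
theorem critical_same_variety_prime_iso (k : Type u) [CommRing k]
    (A : Type v) [NonUnitalNonAssocRing A] [Module k A] [SMulCommClass k A A]
    [IsScalarTower k A A] [Finite A]
    (B : Type w) [NonUnitalNonAssocRing B] [Module k B] [SMulCommClass k B B]
    [IsScalarTower k B B] [Finite B]
    (hA : IsCritical k A) (hB : IsCritical k B)
    (hPI : Ids k A = Ids k B) (hprime : IsPrimeAlg k A) :
    IsPrimeAlg k B ∧ ∃ e : A ≃ₗ[k] B, ∀ x y : A, e (x * y) = e x * e y := by
  classical
  haveI : Nonempty A := ⟨0⟩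
  obtain ⟨n₀, hn₀⟩ := (exists_injective_nat A)
  set g : ℕ → A := Function.invFun n₀ with hgdef
  have hg : ∀ a, g (n₀ a) = a := Function.leftInverse_invFun hn₀
  obtain ⟨v, hv⟩ := exists_good_subst hprime hPI g n₀ hg
  set π : FreeAlg k →ₙₐ[k] A := lift k g with hπdef
  set lam : FreeAlg k →ₙₐ[k] B := lift k (fun n => v (g n)) with hlamdef
  have hπof : ∀ a : A, π (of k (n₀ a)) = a := by
    intro a; rw [hπdef, lift_of_apply, hg]
  -- hv : ∀ f, lam f = 0 → π f = 0
  -- the section of B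
  set R : NonUnitalSubalgebra k B := NonUnitalAlgHom.range lam with hRdef
  have memR : ∀ F : FreeAlg k, lam F ∈ R := fun F => NonUnitalAlgHom.mem_range_self lam F
  set I : Submodule k ↥R :=
    { carrier := {x | ∃ F, π F = 0 ∧ lam F = (x : B)}
      add_mem' := by
        rintro x y ⟨F, hF, hFx⟩ ⟨G, hG, hGy⟩
        exact ⟨F + G, by rw [map_add, hF, hG, add_zero],
          by rw [map_add, hFx, hGy]; rfl⟩
      zero_mem' := ⟨0, map_zero _, by rw [map_zero]; rfl⟩
      smul_mem' := by
        rintro c x ⟨F, hF, hFx⟩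
        exact ⟨c • F, by rw [map_smul, hF, smul_zero],
          by rw [map_smul, hFx]; rfl⟩ } with hIdef
  have memI : ∀ x : ↥R, x ∈ I ↔ ∃ F, π F = 0 ∧ lam F = (x : B) := fun x => Iff.rfl
  have hIideal : IsIdeal k (↥R) I := by
    rintro a x hx
    obtain ⟨F, hF, hFx⟩ := (memI x).mp hx
    obtain ⟨G, hGa⟩ := (NonUnitalAlgHom.mem_range lam).mp a.2
    constructor
    · refine (memI _).mpr ⟨G * F, by rw [map_mul, hF, mul_zero], ?_⟩
      calc lam (G * F) = lam G * lam F := map_mul lam G F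
        _ = (a : B) * (x : B) := by rw [hGa, hFx]
        _ = ((a * x : ↥R) : B) := rfl
    · refine (memI _).mpr ⟨F * G, by rw [map_mul, hF, zero_mul], ?_⟩
      calc lam (F * G) = lam F * lam G := map_mul lam F G
        _ = (x : B) * (a : B) := by rw [hGa, hFx]
        _ = ((x * a : ↥R) : B) := rfl
  -- obtain B's criticality witness
  obtain ⟨fB, hfBnot, hcrit⟩ := hB
  have hnotproper : R = ⊤ ∧ I = ⊥ := by
    by_contra hcon
    have hsec : SectionPI k B R I fB := hcrit R I hIideal hcon
    -- derive that fB is a PI of A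
    have hPIA : IsPI k A fB := by
      intro ψ
      have hψ : lift k (ψ ∘ of k) = ψ := lift_comp_of k ψ
      set u : ℕ → A := ψ ∘ of k with hudef
      set Fn : ℕ → FreeAlg k := fun n => of k (n₀ (u n)) with hFndef
      have hπFn : ∀ n, π (Fn n) = u n := fun n => hπof (u n)
      set wR : ℕ → ↥R := fun n => ⟨lam (Fn n), memR (Fn n)⟩ with hwRdef
      obtain ⟨G, hG0, hGeq⟩ := (memI _).mp (hsec wR)
      have hval : ((lift k wR fB : ↥R) : B) = lam (lift k Fn fB) := by
        have h1 := hom_lift (NonUnitalSubalgebraClass.subtype R) wR fB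
        have h2 := hom_lift lam Fn fB
        have hw : ⇑(NonUnitalSubalgebraClass.subtype R) ∘ wR = ⇑lam ∘ Fn := rfl
        rw [h2, ← hw, ← h1]
        rfl
      have hker : lam (lift k Fn fB - G) = 0 := by
        rw [map_sub, hGeq, hval, sub_self]
      have hπ0 : π (lift k Fn fB - G) = 0 := hv _ hker
      have hπlift : π (lift k Fn fB) = lift k u fB := by
        rw [hom_lift]
        have hw : ⇑π ∘ Fn = u := funext hπFn
        rw [hw]
      have : π (lift k Fn fB) = 0 := by
        rw [map_sub, hG0, sub_zero] at hπ0
        exact hπ0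
      rw [hπlift] at this
      rw [← hψ]
      exact this
    have : IsPI k B fB := by
      have h1 : fB ∈ Ids k A := hPIA
      rw [hPI] at h1
      exact h1
    exact hfBnot this
  obtain ⟨hRtop, hIbot⟩ := hnotproper
  -- surjectivity of lam
  have hlamsurj : ∀ b : B, ∃ F, lam F = b := by
    intro b
    have : b ∈ R := by rw [hRtop]; trivial
    exact this
  -- kernel equality
  have hker2 : ∀ F : FreeAlg k, π F = 0 → lam F = 0 := by
    intro F hF
    have hx : (⟨lam F, memR F⟩ : ↥R) ∈ I := (memI _).mpr ⟨F, hF, rfl⟩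
    rw [hIbot] at hx
    have := Submodule.mem_bot k |>.mp hx
    exact congrArg Subtype.val this
  have dep : ∀ F G : FreeAlg k, π F = π G → lam F = lam G := by
    intro F G h
    have : π (F - G) = 0 := by rw [map_sub, h, sub_self]
    have := hker2 _ this
    rw [map_sub, sub_eq_zero] at this
    exact this
  -- construct the bijective hom
  set Fa : A → FreeAlg k := fun a => of k (n₀ a) with hFadef
  have hπFa : ∀ a, π (Fa a) = a := fun a => hπof a
  set eB : A → B := fun a => lam (Fa a) with heBdef
  have heπ : ∀ F : FreeAlg k, eB (π F) = lam F := by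
    intro F
    exact dep _ _ (by rw [hπFa])
  have hadd : ∀ a b : A, eB (a + b) = eB a + eB b := by
    intro a b
    have h1 : a + b = π (Fa a + Fa b) := by rw [map_add, hπFa, hπFa]
    rw [h1, heπ, map_add]
  have hsmul : ∀ (c : k) (a : A), eB (c • a) = c • eB a := by
    intro c a
    have h1 : c • a = π (c • Fa a) := by rw [map_smul, hπFa]
    rw [h1, heπ, map_smul]
  have hmul : ∀ a b : A, eB (a * b) = eB a * eB b := by
    intro a b
    have h1 : a * b = π (Fa a * Fa b) := by rw [map_mul, hπFa, hπFa]
    rw [h1, heπ, map_mul]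
  have hzero : eB 0 = 0 := by
    have h1 : (0 : A) = π 0 := (map_zero π).symm
    rw [h1, heπ, map_zero]
  have hinj : Injective eB := by
    intro a b h
    have h1 : lam (Fa a - Fa b) = 0 := by
      rw [map_sub, sub_eq_zero]
      exact h
    have h2 := hv _ h1
    rw [map_sub, hπFa, hπFa, sub_eq_zero] at h2
    exact h2
  have hsurj : Surjective eB := by
    intro b
    obtain ⟨F, hF⟩ := hlamsurj b
    exact ⟨π F, by rw [heπ, hF]⟩
  set ehom : A →ₙₐ[k] B :=
    { toFun := eB
      map_smul' := hsmul
      map_zero' := hzero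
      map_add' := hadd
      map_mul' := hmul } with hehomdef
  have hehom : ∀ a, ehom a = eB a := fun a => rfl
  -- linear equivalence
  set e : A ≃ₗ[k] B := LinearEquiv.ofBijective (toLin ehom) ⟨hinj, hsurj⟩ with hedef
  have he : ∀ a, e a = eB a := fun a => rfl
  constructor
  · -- B is prime
    intro I' J' hI'i hJ'i hI'ne hJ'ne
    set I2 : Submodule k A := Submodule.comap (toLin ehom) I' with hI2def
    set J2 : Submodule k A := Submodule.comap (toLin ehom) J' with hJ2def
    have hI2i : IsIdeal k A I2 := by
      intro a x hx
      constructor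
      · show ehom (a * x) ∈ I'
        rw [hehom, hmul]
        exact (hI'i (eB a) _ hx).1
      · show ehom (x * a) ∈ I'
        rw [hehom, hmul]
        exact (hI'i (eB a) _ hx).2
    have hJ2i : IsIdeal k A J2 := by
      intro a x hx
      constructor
      · show ehom (a * x) ∈ J'
        rw [hehom, hmul]
        exact (hJ'i (eB a) _ hx).1
      · show ehom (x * a) ∈ J'
        rw [hehom, hmul]
        exact (hJ'i (eB a) _ hx).2
    have hI2ne : I2 ≠ ⊥ := by
      obtain ⟨b, hb, hbne⟩ := Submodule.ne_bot_iff _ |>.mp hI'ne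
      obtain ⟨a, ha⟩ := hsurj b
      refine Submodule.ne_bot_iff _ |>.mpr ⟨a, ?_, ?_⟩
      · show ehom a ∈ I'
        rw [hehom, ha]
        exact hb
      · rintro rfl
        rw [hzero] at ha
        exact hbne ha.symm
    have hJ2ne : J2 ≠ ⊥ := by
      obtain ⟨b, hb, hbne⟩ := Submodule.ne_bot_iff _ |>.mp hJ'ne
      obtain ⟨a, ha⟩ := hsurj b
      refine Submodule.ne_bot_iff _ |>.mpr ⟨a, ?_, ?_⟩
      · show ehom a ∈ J'
        rw [hehom, ha]
        exact hb
      · rintro rfl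
        rw [hzero] at ha
        exact hbne ha.symm
    have hne := hprime I2 J2 hI2i hJ2i hI2ne hJ2ne
    obtain ⟨z, hz, hzne⟩ := Submodule.ne_bot_iff _ |>.mp hne
    have hmem : ehom z ∈ mulSet k B (ehom '' I2) (ehom '' J2) := hom_mulSet ehom hz
    have hsub : mulSet k B (ehom '' I2) (ehom '' J2) ≤ mulSet k B I' J' := by
      refine mulSet_mono ?_ ?_
      · rintro _ ⟨x, hx, rfl⟩; exact hx
      · rintro _ ⟨x, hx, rfl⟩; exact hx
    refine Submodule.ne_bot_iff _ |>.mpr ⟨ehom z, hsub hmem, ?_⟩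
    intro h0
    exact hzne (hinj (by rw [← hehom z, h0, hzero]))
  · exact ⟨e, fun x y => by rw [he, he, he, hmul]⟩


end MainProof
end
end
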